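/- arXiv:2503.17256 — 5 statements merged into one kernel-verified Lean document; each statement's English description precedes it below -/
import Mathlib

section
/- The number of classical parking functions with m cars and n spots, where 1 ≤ m ≤ n, equals (n+1-m)·(n+1)^(m-1). -/
/-!
Pollak's circle argument. Add a spot `n + 1` and close the street into the circle `ZMod (n + 1)`,
on which spot `n + 1` is `0`. On the circle every car parks, and a preference sequence is a
classical parking function exactly when spot `0` stays empty: a car that would drive off the end
of the street parks at `0` instead, and nobody prefers `0`. Rotating all preferences by `c`
rotates the occupied spots by `c`, so each spot is left empty by equally many sequences in
`(ZMod (n + 1))^m`. Every sequence leaves exactly `n + 1 - m` spots empty, so double counting gives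
`(n + 1) · #{sequences leaving 0 empty} = (n + 1 - m) (n + 1)^m`.
-/

/-- Try to park a car with preference `a` under the `(k,l)`-pullback rule on a
street with spots `1,…,n`, where `occ` is the set of occupied spots.  The car
parks at `a` if it is free; otherwise it checks `a-1,…,a-k` (not before spot 1)
and parks in the first free spot found; failing that it checks `a+1,…,a+l`
(not beyond spot `n`).  Returns the spot where the car parks, if any. -/
def pullTry (k l n : ℕ) (occ : Finset ℕ) (a : ℕ) : Option ℕ :=
  if a ∉ occ then some a
  else
    match ((List.range k).map (fun j => a - (j + 1))).find?
        (fun s => decide (1 ≤ s ∧ s ∉ occ)) with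
    | some s => some s
    | none =>
        ((List.range l).map (fun j => a + (j + 1))).find?
          (fun s => decide (s ≤ n ∧ s ∉ occ))

/-- Park a list of cars sequentially by the `(k,l)`-pullback rule, returning the
list of spots where they park (in order) if all of them park. -/
def pullRunAux (k l n : ℕ) : List ℕ → Finset ℕ → Option (List ℕ)
  | [], _ => some []
  | a :: rest, occ =>
    match pullTry k l n occ a with
    | none => none
    | some s => (pullRunAux k l n rest (insert s occ)).map (fun t => s :: t)

def pullRun (k l n : ℕ) (prefs : List ℕ) : Option (List ℕ) :=
  pullRunAux k l n prefs ∅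

/-- The `k`-Naples rule: back up at most `k` spots, then drive forward all the
way to spot `n`. -/
def naplesTry (k n : ℕ) (occ : Finset ℕ) (a : ℕ) : Option ℕ :=
  if a ∉ occ then some a
  else
    match ((List.range k).map (fun j => a - (j + 1))).find?
        (fun s => decide (1 ≤ s ∧ s ∉ occ)) with
    | some s => some s
    | none => (List.range' (a + 1) (n - a)).find? (fun s => decide (s ∉ occ))

def naplesRunAux (k n : ℕ) : List ℕ → Finset ℕ → Option (List ℕ)
  | [], _ => some []
  | a :: rest, occ =>
    match naplesTry k n occ a with
    | none => none
    | some s => (naplesRunAux k n rest (insert s occ)).map (fun t => s :: t)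

def naplesRun (k n : ℕ) (prefs : List ℕ) : Option (List ℕ) :=
  naplesRunAux k n prefs ∅

/-- The classical rule: park in the first free spot among `a, a+1, …, n`. -/
def classicalTry (n : ℕ) (occ : Finset ℕ) (a : ℕ) : Option ℕ :=
  (List.range' a (n + 1 - a)).find? (fun s => decide (s ∉ occ))

def classicalRunAux (n : ℕ) : List ℕ → Finset ℕ → Option (List ℕ)
  | [], _ => some []
  | a :: rest, occ =>
    match classicalTry n occ a with
    | none => none
    | some s => (classicalRunAux n rest (insert s occ)).map (fun t => s :: t)

def classicalRun (n : ℕ) (prefs : List ℕ) : Option (List ℕ) :=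
  classicalRunAux n prefs ∅

/-- The list of (1-based) preferences encoded by a tuple `α ∈ [n]^m`. -/
def prefList {m n : ℕ} (α : Fin m → Fin n) : List ℕ :=
  List.ofFn (fun i => (α i : ℕ) + 1)

/-- The finset of `(k,l)`-pullback `(m,n)`-parking functions. -/
def pullPFs (k l m n : ℕ) : Finset (Fin m → Fin n) :=
  Finset.univ.filter (fun α => (pullRun k l n (prefList α)).isSome = true)

/-- The finset of `k`-Naples `(m,n)`-parking functions. -/
def naplesPFs (k m n : ℕ) : Finset (Fin m → Fin n) :=
  Finset.univ.filter (fun α => (naplesRun k n (prefList α)).isSome = true)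

/-- The finset of classical `(m,n)`-parking functions. -/
def classicalPFs (m n : ℕ) : Finset (Fin m → Fin n) :=
  Finset.univ.filter (fun α => (classicalRun n (prefList α)).isSome = true)

section CircularParking

variable {N : ℕ}

open scoped Classical in
/-- If every spot is taken the result is the junk value `a`. -/
noncomputable def circularTry (occ : Finset (ZMod N)) (a : ZMod N) : ZMod N :=
  if h : ∃ j : ℕ, a + j ∉ occ then a + Nat.find h else a

noncomputable def circularRun : List (ZMod N) → Finset (ZMod N) → Finset (ZMod N)
  | [], occ => occ
  | a :: rest, occ => circularRun rest (insert (circularTry occ a) occ)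

theorem circularTry_eq_add_of_forall_lt {occ : Finset (ZMod N)} {a : ZMod N} {j : ℕ}
    (hj : a + j ∉ occ) (hlt : ∀ i < j, a + i ∈ occ) : circularTry occ a = a + j := by
  classical
  have h : ∃ j : ℕ, a + j ∉ occ := ⟨j, hj⟩
  rw [circularTry, dif_pos h, (Nat.find_eq_iff h).2 ⟨hj, fun i hi => not_not.2 (hlt i hi)⟩]

theorem circularTry_of_notMem {occ : Finset (ZMod N)} {a : ZMod N} (ha : a ∉ occ) :
    circularTry occ a = a := by
  simpa using circularTry_eq_add_of_forall_lt (j := 0) (by simpa using ha) (by simp)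

theorem circularTry_notMem {occ : Finset (ZMod N)} (hocc : occ.card < N) (a : ZMod N) :
    circularTry occ a ∉ occ := by
  classical
  have : NeZero N := ⟨by omega⟩
  obtain ⟨s, hs⟩ : ∃ s, s ∉ occ := by
    by_contra! h
    rw [Finset.eq_univ_of_forall h, Finset.card_univ, ZMod.card] at hocc
    exact hocc.false
  have h : ∃ j : ℕ, a + j ∉ occ := ⟨(s - a).val, by simpa using hs⟩
  rw [circularTry, dif_pos h]
  exact Nat.find_spec h

theorem circularTry_image_add_right (occ : Finset (ZMod N)) (a c : ZMod N) :
    circularTry (occ.image (· + c)) (a + c) = circularTry occ a + c := by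
  classical
  have key {j : ℕ} : a + c + j ∉ occ.image (· + c) ↔ a + j ∉ occ := by
    rw [add_right_comm, (add_left_injective c).mem_finset_image]
  by_cases h : ∃ j : ℕ, a + j ∉ occ
  · have h' : ∃ j : ℕ, a + c + j ∉ occ.image (· + c) := h.imp fun _ => key.2
    rw [circularTry, circularTry, dif_pos h, dif_pos h', Nat.find_congr' key, add_right_comm]
  · have h' : ¬∃ j : ℕ, a + c + j ∉ occ.image (· + c) := fun h' =>
      h (h'.imp fun _ => key.1)
    rw [circularTry, circularTry, dif_neg h, dif_neg h']

theorem subset_circularRun (prefs : List (ZMod N)) (occ : Finset (ZMod N)) :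
    occ ⊆ circularRun prefs occ := by
  induction prefs generalizing occ with
  | nil => exact subset_rfl
  | cons a rest ih => exact (Finset.subset_insert _ _).trans (ih _)

theorem mem_circularRun_of_mem {a : ZMod N} {prefs : List (ZMod N)} (ha : a ∈ prefs)
    (occ : Finset (ZMod N)) : a ∈ circularRun prefs occ := by
  induction prefs generalizing occ with
  | nil => simp at ha
  | cons b rest ih =>
    rcases List.mem_cons.1 ha with rfl | ha
    · apply subset_circularRun rest
      by_cases hb : a ∈ occ
      · exact Finset.mem_insert_of_mem hb
      · rw [circularTry_of_notMem hb]
        exact Finset.mem_insert_self _ _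
    · exact ih ha _

theorem card_circularRun (prefs : List (ZMod N)) (occ : Finset (ZMod N))
    (h : occ.card + prefs.length ≤ N) :
    (circularRun prefs occ).card = occ.card + prefs.length := by
  induction prefs generalizing occ with
  | nil => rfl
  | cons a rest ih =>
    rw [List.length_cons] at h
    have hcard := Finset.card_insert_of_notMem (circularTry_notMem (by omega : occ.card < N) a)
    rw [circularRun, ih _ (by omega), hcard, List.length_cons]
    omega

theorem circularRun_map_add_right (prefs : List (ZMod N)) (occ : Finset (ZMod N))
    (c : ZMod N) :
    circularRun (prefs.map (· + c)) (occ.image (· + c)) =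
      (circularRun prefs occ).image (· + c) := by
  classical
  induction prefs generalizing occ with
  | nil => rfl
  | cons a rest ih =>
    rw [List.map_cons, circularRun, circularRun, circularTry_image_add_right,
      ← Finset.image_insert (· + c), ih]

theorem natCast_mem_image_natCast_iff {occ : Finset ℕ} (hocc : ∀ t ∈ occ, t < N) {s : ℕ}
    (hs : s < N) : (s : ZMod N) ∈ occ.image Nat.cast ↔ s ∈ occ := by
  rw [← Finset.mem_coe, Finset.coe_image]
  exact (CharP.natCast_injOn_Iio (ZMod N) N).mem_image_iff hocc hs

theorem circularTry_natCast {occ : Finset (ZMod N)} {a s : ℕ} (has : a ≤ s)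
    (hs : (s : ZMod N) ∉ occ) (hlt : ∀ t, a ≤ t → t < s → (t : ZMod N) ∈ occ) :
    circularTry occ a = s := by
  have hcast (j : ℕ) : (a : ZMod N) + j = (a + j : ℕ) := (Nat.cast_add a j).symm
  rw [circularTry_eq_add_of_forall_lt (j := s - a), hcast, Nat.add_sub_cancel' has]
  · rwa [hcast, Nat.add_sub_cancel' has]
  · intro i hi
    rw [hcast]
    exact hlt _ (by omega) (by omega)

end CircularParking

section Counting

open Finset

variable {N m : ℕ}

theorem add_right_mem_circularRun_ofFn_iff (β : Fin m → ZMod N) (c : ZMod N) :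
    c ∈ circularRun (List.ofFn fun k => β k + c) ∅ ↔
      0 ∈ circularRun (List.ofFn β) ∅ := by
  classical
  have h := circularRun_map_add_right (List.ofFn β) ∅ c
  rw [List.map_ofFn, image_empty] at h
  calc c ∈ circularRun (List.ofFn fun k => β k + c) ∅
      ↔ 0 + c ∈ (circularRun (List.ofFn β) ∅).image (· + c) := by rw [zero_add, ← h]; rfl
    _ ↔ 0 ∈ circularRun (List.ofFn β) ∅ := (add_left_injective c).mem_finset_image

theorem card_filter_notMem_circularRun_eq [NeZero N] (c : ZMod N) :
    #{β : Fin m → ZMod N | c ∉ circularRun (List.ofFn β) ∅} =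
      #{β : Fin m → ZMod N | 0 ∉ circularRun (List.ofFn β) ∅} := by
  refine card_equiv (Equiv.subRight fun _ => c) fun β => ?_
  simp only [mem_filter, mem_univ, true_and, Equiv.subRight_apply]
  rw [← add_right_mem_circularRun_ofFn_iff _ c]
  simp

theorem card_filter_zero_notMem_circularRun_mul [NeZero N] (hm : m ≤ N) :
    #{β : Fin m → ZMod N | 0 ∉ circularRun (List.ofFn β) ∅} * N = (N - m) * N ^ m := by
  classical
  calc #{β : Fin m → ZMod N | 0 ∉ circularRun (List.ofFn β) ∅} * N
      = ∑ c : ZMod N, #{β : Fin m → ZMod N | c ∉ circularRun (List.ofFn β) ∅} := by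
        simp [card_filter_notMem_circularRun_eq, ZMod.card, mul_comm]
    _ = ∑ β : Fin m → ZMod N, #{c : ZMod N | c ∉ circularRun (List.ofFn β) ∅} :=
        sum_card_bipartiteAbove_eq_sum_card_bipartiteBelow _
    _ = ∑ _β : Fin m → ZMod N, (N - m) := by
        refine sum_congr rfl fun β _ => ?_
        rw [filter_not, filter_mem_eq_inter, univ_inter, ← compl_eq_univ_sdiff, card_compl,
          card_circularRun _ _ (by simpa using hm), ZMod.card]
        simp
    _ = (N - m) * N ^ m := by simp [ZMod.card, mul_comm]

end Counting

section Correspondence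

theorem classicalTry_eq_some_iff {n a s : ℕ} {occ : Finset ℕ} :
    classicalTry n occ a = some s ↔
      a ≤ s ∧ s ≤ n ∧ s ∉ occ ∧ ∀ t, a ≤ t → t < s → t ∈ occ := by
  simp only [classicalTry, List.find?_range'_eq_some, List.mem_range'_1, decide_eq_true_eq,
    Bool.not_eq_eq_eq_not, Bool.not_true, decide_eq_false_iff_not, not_not]
  constructor
  · rintro ⟨hs, ⟨has, hsn⟩, hlt⟩
    exact ⟨has, by omega, hs, hlt⟩
  · rintro ⟨has, hsn, hs, hlt⟩
    exact ⟨hs, ⟨has, by omega⟩, hlt⟩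

theorem classicalTry_eq_none_iff {n a : ℕ} {occ : Finset ℕ} :
    classicalTry n occ a = none ↔ ∀ t, a ≤ t → t ≤ n → t ∈ occ := by
  simp only [classicalTry, List.find?_range'_eq_none, Bool.not_eq_eq_eq_not,
    Bool.not_true, decide_eq_false_iff_not, not_not]
  exact forall_congr' fun t => imp_congr_right fun hat => imp_congr_left (by omega)

theorem zero_notMem_image_natCast {n : ℕ} {occ : Finset ℕ} (hocc : occ ⊆ Finset.Icc 1 n) :
    (0 : ZMod (n + 1)) ∉ occ.image Nat.cast := by
  rw [← Nat.cast_zero, natCast_mem_image_natCast_iff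
    (fun t ht => Nat.lt_succ_of_le (Finset.mem_Icc.1 (hocc ht)).2) (Nat.succ_pos n)]
  exact fun h0 => by simpa using hocc h0

theorem classicalRunAux_isSome_iff {n : ℕ} (prefs : List ℕ)
    (hprefs : ∀ a ∈ prefs, 1 ≤ a ∧ a ≤ n) (occ : Finset ℕ)
    (hocc : occ ⊆ Finset.Icc 1 n) :
    (classicalRunAux n prefs occ).isSome ↔
      (0 : ZMod (n + 1)) ∉ circularRun (prefs.map Nat.cast) (occ.image Nat.cast) := by
  induction prefs generalizing occ with
  | nil => simpa [classicalRunAux, circularRun] using zero_notMem_image_natCast hocc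
  | cons a rest ih =>
    have hlt : ∀ t ∈ occ, t < n + 1 := fun t ht =>
      Nat.lt_succ_of_le (Finset.mem_Icc.1 (hocc ht)).2
    obtain ⟨ha1, han⟩ := hprefs a List.mem_cons_self
    have hrest : ∀ b ∈ rest, 1 ≤ b ∧ b ≤ n := fun b hb =>
      hprefs b (List.mem_cons_of_mem _ hb)
    rw [List.map_cons, circularRun]
    cases h : classicalTry n occ a with
    | none =>
      have htry : circularTry (occ.image Nat.cast) (a : ZMod (n + 1)) =
          ((n + 1 : ℕ) : ZMod (n + 1)) :=
        circularTry_natCast (by omega)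
          (by rw [ZMod.natCast_self]; exact zero_notMem_image_natCast hocc)
          fun t hat htn => (natCast_mem_image_natCast_iff hlt htn).2
            (classicalTry_eq_none_iff.1 h t hat (by omega))
      rw [htry, ZMod.natCast_self]
      simpa [classicalRunAux, h] using subset_circularRun _ _ (Finset.mem_insert_self _ _)
    | some s =>
      obtain ⟨has, hsn, hs, hbefore⟩ := classicalTry_eq_some_iff.1 h
      have htry : circularTry (occ.image Nat.cast) (a : ZMod (n + 1)) = s :=
        circularTry_natCast has (by rwa [natCast_mem_image_natCast_iff hlt (by omega)])
          fun t hat hts =>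
            (natCast_mem_image_natCast_iff hlt (by omega)).2 (hbefore t hat hts)
      rw [htry, ← Finset.image_insert,
        ← ih hrest _ (Finset.insert_subset (Finset.mem_Icc.2 ⟨by omega, hsn⟩) hocc)]
      simp [classicalRunAux, h]

end Correspondence

section Encoding

open Finset

variable {m n : ℕ}

theorem natCast_succ_injective :
    Function.Injective fun i : Fin n => (((i : ℕ) + 1 : ℕ) : ZMod (n + 1)) := fun i j hij =>
  Fin.ext <| Nat.succ_injective <| CharP.natCast_injOn_Iio (ZMod (n + 1)) (n + 1)
    (Set.mem_Iio.2 (by omega)) (Set.mem_Iio.2 (by omega)) hij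

theorem exists_natCast_succ_eq {x : ZMod (n + 1)} (hx : x ≠ 0) :
    ∃ i : Fin n, (((i : ℕ) + 1 : ℕ) : ZMod (n + 1)) = x := by
  have hval : x.val ≠ 0 := (ZMod.val_ne_zero x).2 hx
  refine ⟨⟨x.val - 1, by have := ZMod.val_lt x; omega⟩, ?_⟩
  rw [Nat.sub_add_cancel (Nat.one_le_iff_ne_zero.2 hval), ZMod.natCast_zmod_val]

theorem mem_classicalPFs_iff (α : Fin m → Fin n) :
    α ∈ classicalPFs m n ↔
      (0 : ZMod (n + 1)) ∉
        circularRun (List.ofFn fun k => (((α k : ℕ) + 1 : ℕ) : ZMod (n + 1))) ∅ := by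
  have hprefs : ∀ a ∈ prefList α, 1 ≤ a ∧ a ≤ n := by
    simp only [prefList, List.mem_ofFn]
    rintro a ⟨k, rfl⟩
    have := (α k).isLt
    omega
  rw [classicalPFs, mem_filter, classicalRun,
    classicalRunAux_isSome_iff _ hprefs ∅ (empty_subset _)]
  simp [prefList, List.map_ofFn, Function.comp_def]

theorem card_classicalPFs :
    #(classicalPFs m n) =
      #{β : Fin m → ZMod (n + 1) | 0 ∉ circularRun (List.ofFn β) ∅} := by
  refine card_bij (fun α _ k => (((α k : ℕ) + 1 : ℕ) : ZMod (n + 1)))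
    (fun α hα => by simpa using (mem_classicalPFs_iff α).1 hα)
    (fun α _ α' _ h => funext fun k => natCast_succ_injective (congrFun h k)) fun β hβ => ?_
  rw [mem_filter] at hβ
  have hne (k : Fin m) : β k ≠ 0 := fun h0 =>
    hβ.2 (h0 ▸ mem_circularRun_of_mem (List.mem_ofFn.2 ⟨k, rfl⟩) ∅)
  choose α hα using fun k => exists_natCast_succ_eq (hne k)
  refine ⟨α, (mem_classicalPFs_iff α).2 ?_, funext hα⟩
  simpa [hα] using hβ.2

end Encoding

theorem stmt0 (m n : ℕ) (h1 : 1 ≤ m) (h2 : m ≤ n) :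
    (classicalPFs m n).card = (n + 1 - m) * (n + 1) ^ (m - 1) := by
  have hcount := card_filter_zero_notMem_circularRun_mul (N := n + 1) (m := m) (by omega)
  rw [card_classicalPFs]
  refine Nat.eq_of_mul_eq_mul_right (Nat.succ_pos n) ?_
  rw [hcount, mul_assoc, ← pow_succ, Nat.sub_add_cancel h1]
end

section
/- For all 0 < k < n, every (k-1)-Naples parking function of length n is a k-Naples parking function of length n; i.e., PF_n(k-1) ⊆ PF_n(k). -/
/-! Let `O` and `O'` be the sets of spots filled when the same cars park by the `(κ+1)`-Naples
rule and by the `κ`-Naples rule. The bolder rule keeps its cars further left: every initial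
segment `[1, j]` of the street holds at least as many cars of `O` as of `O'`, and both runs have
parked equally many cars. This invariant survives each new car, and it forces the
`(κ+1)`-rule to park a car whenever the `κ`-rule does: a full window `(a - κ - 2, n]` in `O`
leaves no room for a free spot of `O'` in the same window. -/

open Finset

def prefixCount (S : Finset ℕ) (j : ℕ) : ℕ := #(S ∩ Iic j)

section prefixCount

variable {S : Finset ℕ} {u v : ℕ}

lemma prefixCount_add_card_inter_Ioc (huv : u ≤ v) :
    prefixCount S u + #(S ∩ Ioc u v) = prefixCount S v := by
  rw [prefixCount, prefixCount, ← Iic_union_Ioc_eq_Iic huv, inter_union_distrib_left,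
    card_union_of_disjoint]
  exact ((Iic_disjoint_Ioc le_rfl).inf_right' S).inf_left' S

lemma prefixCount_eq_add_of_Ioc_subset (huv : u ≤ v) (h : Ioc u v ⊆ S) :
    prefixCount S v = prefixCount S u + (v - u) := by
  rw [← prefixCount_add_card_inter_Ioc huv, inter_eq_right.mpr h, Nat.card_Ioc]

lemma prefixCount_lt_add_of_notMem {w : ℕ} (hw : w ∈ Ioc u v) (hwS : w ∉ S) :
    prefixCount S v < prefixCount S u + (v - u) := by
  have hlt : #(S ∩ Ioc u v) < #(Ioc u v) :=
    card_lt_card ⟨inter_subset_right, fun h => hwS (mem_of_mem_inter_left (h hw))⟩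
  obtain ⟨huw, hwv⟩ := mem_Ioc.mp hw
  rw [← prefixCount_add_card_inter_Ioc (huw.le.trans hwv)]
  rw [Nat.card_Ioc] at hlt
  omega

lemma prefixCount_insert {s : ℕ} (hs : s ∉ S) (j : ℕ) :
    prefixCount (insert s S) j = prefixCount S j + if s ≤ j then 1 else 0 := by
  unfold prefixCount
  split_ifs with hsj
  · rw [insert_inter_of_mem (mem_Iic.mpr hsj), card_insert_of_notMem (by simp [hs])]
  · rw [insert_inter_of_notMem (by simpa using hsj), add_zero]

end prefixCount

section search
variable {κ n a s : ℕ} {O : Finset ℕ}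

lemma find?_backward_eq_some
    (h : ((List.range κ).map fun j => a - (j + 1)).find? (fun s => decide (1 ≤ s ∧ s ∉ O)) =
      some s) :
    s ∉ O ∧ a - κ - 1 < s ∧ s < a ∧ Ioo s a ⊆ O := by
  simp only [List.find?_map, Option.map_eq_some_iff, List.find?_range_eq_some,
    Function.comp_apply, decide_eq_true_eq, List.mem_range, Bool.not_eq_true',
    decide_eq_false_iff_not, not_and, not_not] at h
  obtain ⟨i, ⟨⟨hs1, hsO⟩, hi, hprev⟩, rfl⟩ := h
  refine ⟨hsO, by omega, by omega, fun x hx => ?_⟩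
  rw [mem_Ioo] at hx
  simpa [show a - (a - x - 1 + 1) = x by omega] using hprev (a - x - 1) (by omega) (by omega)

lemma find?_backward_eq_none
    (h : ((List.range κ).map fun j => a - (j + 1)).find? (fun s => decide (1 ≤ s ∧ s ∉ O)) =
      none) :
    Ioo (a - κ - 1) a ⊆ O := by
  simp only [List.find?_map, Option.map_eq_none_iff, List.find?_range_eq_none,
    Function.comp_apply, Bool.not_eq_true', decide_eq_false_iff_not, not_and, not_not] at h
  intro x hx
  rw [mem_Ioo] at hx
  simpa [show a - (a - x - 1 + 1) = x by omega] using h (a - x - 1) (by omega) (by omega)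

lemma find?_forward_eq_some
    (h : (List.range' (a + 1) (n - a)).find? (fun s => decide (s ∉ O)) = some s) :
    s ∉ O ∧ a < s ∧ s ≤ n ∧ Ioo a s ⊆ O := by
  simp only [List.find?_range'_eq_some, decide_eq_true_eq, List.mem_range'_1,
    Bool.not_eq_true', decide_eq_false_iff_not, not_not] at h
  obtain ⟨hsO, hs, hprev⟩ := h
  exact ⟨hsO, by omega, by omega, fun x hx => hprev x (by simp at hx; omega) (mem_Ioo.mp hx).2⟩

lemma find?_forward_eq_none_iff :
    (List.range' (a + 1) (n - a)).find? (fun s => decide (s ∉ O)) = none ↔ Ioc a n ⊆ O := by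
  simp only [List.find?_range'_eq_none, Bool.not_eq_true', decide_eq_false_iff_not, not_not]
  constructor
  · intro h x hx
    rw [mem_Ioc] at hx
    exact h x (by omega) (by omega)
  · intro h x hax hxn
    exact h (mem_Ioc.mpr ⟨by omega, by omega⟩)

end search

section naplesTry
variable {κ n a s : ℕ} {O : Finset ℕ}

/-- Truncated subtraction makes the window `Ioc (a - κ - 1) n` start at spot `1` when `a ≤ κ`. -/
lemma naplesTry_eq_none_iff (ha : 1 ≤ a) (han : a ≤ n) :
    naplesTry κ n O a = none ↔ Ioc (a - κ - 1) n ⊆ O := by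
  unfold naplesTry
  by_cases haO : a ∈ O
  · rw [if_neg (not_not.mpr haO)]
    split
    next s hs =>
      obtain ⟨hsO, hκs, hsa, -⟩ := find?_backward_eq_some hs
      simp only [reduceCtorEq, false_iff, not_subset]
      exact ⟨s, mem_Ioc.mpr ⟨hκs, by omega⟩, hsO⟩
    next hs =>
      have hback := find?_backward_eq_none hs
      rw [find?_forward_eq_none_iff]
      constructor
      · intro hfwd x hx
        rw [mem_Ioc] at hx
        rcases lt_trichotomy x a with hxa | rfl | hax
        · exact hback (mem_Ioo.mpr ⟨hx.1, hxa⟩)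
        · exact haO
        · exact hfwd (mem_Ioc.mpr ⟨hax, hx.2⟩)
      · exact fun h => (Ioc_subset_Ioc_left (by omega)).trans h
  · simp only [haO, not_false_eq_true, if_true, reduceCtorEq, false_iff, not_subset]
    exact ⟨a, mem_Ioc.mpr ⟨by omega, han⟩, haO⟩

lemma naplesTry_eq_some (ha : 1 ≤ a) (han : a ≤ n) (h : naplesTry κ n O a = some s) :
    s ∉ O ∧ a - κ - 1 < s ∧ s ≤ n ∧
      (a < s ∧ Ioo (a - κ - 1) s ⊆ O ∨ s ≤ a ∧ Ioc s a ⊆ O) := by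
  unfold naplesTry at h
  by_cases haO : a ∈ O
  · rw [if_neg (not_not.mpr haO)] at h
    split at h
    next s' hs =>
      cases h
      obtain ⟨hsO, hκs, hsa, hIoo⟩ := find?_backward_eq_some hs
      refine ⟨hsO, hκs, by omega, Or.inr ⟨hsa.le, fun x hx => ?_⟩⟩
      rcases (mem_Ioc.mp hx).2.lt_or_eq with hxa | rfl
      · exact hIoo (mem_Ioo.mpr ⟨(mem_Ioc.mp hx).1, hxa⟩)
      · exact haO
    next hs =>
      have hback := find?_backward_eq_none hs
      obtain ⟨hsO, has, hsn, hIoo⟩ := find?_forward_eq_some h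
      refine ⟨hsO, by omega, hsn, Or.inl ⟨has, fun x hx => ?_⟩⟩
      rw [mem_Ioo] at hx
      rcases lt_trichotomy x a with hxa | rfl | hax
      · exact hback (mem_Ioo.mpr ⟨hx.1, hxa⟩)
      · exact haO
      · exact hIoo (mem_Ioo.mpr ⟨hax, hx.2⟩)
  · simp only [haO, not_false_eq_true, if_true, Option.some.injEq] at h
    subst h
    exact ⟨haO, by omega, han, Or.inr ⟨le_rfl, by simp⟩⟩

end naplesTry

/-- The invariant relating the spots `O` filled by the `(κ+1)`-rule to the spots `O'` filled by
the `κ`-rule after the same cars have parked. -/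
structure PrefixDominates (n : ℕ) (O O' : Finset ℕ) : Prop where
  prefixCount_le : ∀ j, prefixCount O' j ≤ prefixCount O j
  prefixCount_eq : prefixCount O n = prefixCount O' n

namespace PrefixDominates

variable {κ n a s s' : ℕ} {O O' : Finset ℕ}

lemma Ioc_subset {t : ℕ} (hd : PrefixDominates n O O') (htn : t ≤ n) (h : Ioc t n ⊆ O) :
    Ioc t n ⊆ O' := by
  by_contra hO'
  obtain ⟨w, hw, hwO'⟩ := not_subset.mp hO'
  have h1 := prefixCount_lt_add_of_notMem hw hwO'
  have h2 := prefixCount_eq_add_of_Ioc_subset htn h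
  have := hd.prefixCount_le t
  have := hd.prefixCount_eq
  omega

lemma naplesTry_eq_none (hd : PrefixDominates n O O') (ha : 1 ≤ a) (han : a ≤ n)
    (h : naplesTry (κ + 1) n O a = none) : naplesTry κ n O' a = none := by
  rw [naplesTry_eq_none_iff ha han] at h ⊢
  exact (Ioc_subset_Ioc_left (by omega)).trans (hd.Ioc_subset (by omega) h)

/-- Either `O` is full on `(a - κ - 2, j]` while `s'` is a hole of `O'` there, or `O'` is full
on `(j, s]` while `s` is a hole of `O`. -/
lemma prefixCount_lt (hd : PrefixDominates n O O') (ha : 1 ≤ a) (han : a ≤ n)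
    (hs : naplesTry (κ + 1) n O a = some s) (hs' : naplesTry κ n O' a = some s')
    {j : ℕ} (hs'j : s' ≤ j) (hjs : j < s) : prefixCount O' j < prefixCount O j := by
  obtain ⟨hsO, -, -, ⟨-, hfwd⟩ | ⟨hsa, hback⟩⟩ := naplesTry_eq_some ha han hs
  · obtain ⟨hs'O', hs'κ, -⟩ := naplesTry_eq_some ha han hs'
    have hO := prefixCount_eq_add_of_Ioc_subset (S := O) (u := a - (κ + 1) - 1) (v := j)
      (by omega) fun x hx => hfwd (mem_Ioo.mpr ⟨(mem_Ioc.mp hx).1, (mem_Ioc.mp hx).2.trans_lt hjs⟩)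
    have hO' := prefixCount_lt_add_of_notMem (u := a - (κ + 1) - 1)
      (mem_Ioc.mpr ⟨by omega, hs'j⟩) hs'O'
    have := hd.prefixCount_le (a - (κ + 1) - 1)
    omega
  · obtain ⟨-, -, -, ⟨has', -⟩ | ⟨-, hback'⟩⟩ := naplesTry_eq_some ha han hs'
    · omega
    have hO' := prefixCount_eq_add_of_Ioc_subset (S := O') hjs.le
      ((Ioc_subset_Ioc (by omega) hsa).trans hback')
    have hO := prefixCount_lt_add_of_notMem (mem_Ioc.mpr ⟨hjs, le_rfl⟩) hsO
    have := hd.prefixCount_le s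
    omega

lemma insert (hd : PrefixDominates n O O') (ha : 1 ≤ a) (han : a ≤ n)
    (hs : naplesTry (κ + 1) n O a = some s) (hs' : naplesTry κ n O' a = some s') :
    PrefixDominates n (insert s O) (insert s' O') := by
  obtain ⟨hsO, -, hsn, -⟩ := naplesTry_eq_some ha han hs
  obtain ⟨hs'O', -, hs'n, -⟩ := naplesTry_eq_some ha han hs'
  refine ⟨fun j => ?_, ?_⟩
  · rw [prefixCount_insert hsO, prefixCount_insert hs'O']
    have := hd.prefixCount_le j
    by_cases hs'j : s' ≤ j
    · by_cases hsj : s ≤ j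
      · simp only [hsj, hs'j, if_true]; omega
      · have := hd.prefixCount_lt ha han hs hs' hs'j (not_le.mp hsj)
        simp only [hsj, hs'j, if_true, if_false]; omega
    · split_ifs <;> omega
  · rw [prefixCount_insert hsO, prefixCount_insert hs'O', if_pos hsn, if_pos hs'n,
      hd.prefixCount_eq]

end PrefixDominates

lemma naplesRunAux_succ_isSome {κ n : ℕ} :
    ∀ (l : List ℕ) (O O' : Finset ℕ), (∀ a ∈ l, 1 ≤ a ∧ a ≤ n) → PrefixDominates n O O' →
      (naplesRunAux κ n l O').isSome → (naplesRunAux (κ + 1) n l O).isSome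
  | [], _, _, _, _, _ => rfl
  | a :: l, O, O', hl, hd, h => by
    obtain ⟨ha, han⟩ := hl a List.mem_cons_self
    rcases hs' : naplesTry κ n O' a with _ | s'
    · simp [naplesRunAux, hs'] at h
    rcases hs : naplesTry (κ + 1) n O a with _ | s
    · simp [hd.naplesTry_eq_none ha han hs] at hs'
    simp only [naplesRunAux, hs, hs', Option.isSome_map] at h ⊢
    exact naplesRunAux_succ_isSome l _ _ (fun b hb => hl b (List.mem_cons_of_mem a hb))
      (hd.insert ha han hs hs') h

theorem naplesPFs_subset_succ (k m n : ℕ) : naplesPFs k m n ⊆ naplesPFs (k + 1) m n := by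
  intro α hα
  rw [naplesPFs, mem_filter_univ, naplesRun] at hα ⊢
  refine naplesRunAux_succ_isSome _ ∅ ∅ ?_ ⟨fun _ => le_rfl, rfl⟩ hα
  intro a ha
  obtain ⟨i, rfl⟩ := List.mem_ofFn.mp ha
  exact ⟨by omega, (α i).isLt⟩

theorem stmt3_general (n k : ℕ) :
    naplesPFs (k - 1) n n ⊆ naplesPFs k n n := by
  cases k with
  | zero => exact subset_rfl
  | succ k => exact naplesPFs_subset_succ k n n

theorem stmt3 (n k : ℕ) (h0 : 0 < k) (h1 : k < n) :
    naplesPFs (k - 1) n n ⊆ naplesPFs k n n :=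
  stmt3_general n k
end

section
/- Fix π ∈ S_{m,n} the outcome of some (k,ℓ)-pullback parking process, and i ∈ [n] with π_i > 0. If car π_i parked in spot i by backing up from an occupied preferred spot to its right, then the number of possible preferences for car π_i equals min(Right(π_i), k), where Right(π_i) is the length of the longest consecutive subsequence π_{i+1}, ..., π_{i+x} with 0 < π_t < π_i for all i+1 ≤ t ≤ i+x. -/
/-- `outcomeOf spots i = j+1` if car `j+1` (0-indexed `j`) parked in spot `i`,
and `0` if spot `i` is vacant.  Here `spots` lists the spots of cars `1,…,m`. -/
def outcomeOf (spots : List ℕ) (i : ℕ) : ℕ :=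
  match spots.findIdx? (· == i) with
  | some j => j + 1
  | none => 0

/-- The outcome of a `(k,l)`-pullback parking function, as a function sending
the (0-based) spot index `i` to the label of the car parked in spot `i+1`
(or `0` if vacant). -/
def pullOutcome (k l n : ℕ) {m : ℕ} (α : Fin m → Fin n) : Fin n → ℕ :=
  fun i => outcomeOf ((pullRun k l n (prefList α)).getD []) ((i : ℕ) + 1)

/-- The outcome of a classical parking function. -/
def classicalOutcome (n : ℕ) {m : ℕ} (α : Fin m → Fin n) : Fin n → ℕ :=
  fun i => outcomeOf ((classicalRun n (prefList α)).getD []) ((i : ℕ) + 1)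

/-- `S_{m,n}`: arrangements of the multiset `{0,…,0} ∪ [m]` with `n - m`
zeros, as functions on the `n` positions. -/
def SmnSet (m n : ℕ) : Finset (Fin n → ℕ) :=
  ((Finset.univ : Finset (Fin n → Fin (m + 1))).image
      (fun π i => (π i : ℕ))).filter
    (fun π => Finset.univ.val.map π =
      Multiset.replicate (n - m) 0 + (Multiset.range m).map (· + 1))

/-- Read an arrangement `π` at the 1-based position `t` (zero outside `[1,n]`). -/
def at1 {n : ℕ} (π : Fin n → ℕ) (t : ℕ) : ℕ :=
  if h : 1 ≤ t ∧ t ≤ n then π ⟨t - 1, by omega⟩ else 0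

/-- The spots occupied by the cars with labels `< c` (those that parked before
car `c`), as read off from the outcome `π`. -/
def occBefore {n : ℕ} (π : Fin n → ℕ) (c : ℕ) : Finset ℕ :=
  (Finset.Icc 1 n).filter (fun s => 0 < at1 π s ∧ at1 π s < c)

/-- `Right(π_i)`: the length of the longest consecutive run
`π_{i+1}, …, π_{i+x}` with `0 < π_t < π_i` throughout. -/
def rightRun {n : ℕ} (π : Fin n → ℕ) (i : ℕ) : ℕ :=
  Nat.findGreatest
    (fun x => ∀ t ∈ Finset.Icc (i + 1) (i + x), 0 < at1 π t ∧ at1 π t < at1 π i) n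

/-- `Left(π_i)`: the length of the longest consecutive run
`π_{i-x}, …, π_{i-1}` with `0 < π_t < π_i` throughout. -/
noncomputable def leftRun {n : ℕ} (π : Fin n → ℕ) (i : ℕ) : ℕ :=
  @Nat.findGreatest
    (fun x => ∀ t ∈ Finset.Icc (i - x) (i - 1), 0 < at1 π t ∧ at1 π t < at1 π i)
    (fun _ => Classical.propDecidable _) n

/-- `B(π_i) = min(Right(π_i), k)`. -/
def Bval (k : ℕ) {n : ℕ} (π : Fin n → ℕ) (i : ℕ) : ℕ :=
  min (rightRun π i) k

/-- `F(π_i)`, defined by cases: `0` if `Left(π_i) = 0`; `min(i-1, l)` if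
`Left(π_i) = i-1 > 0`; and `max(min(Left(π_i) - k, l), 0)` (truncated
subtraction) if `0 < Left(π_i) < i-1`. -/
noncomputable def Fval (k l : ℕ) {n : ℕ} (π : Fin n → ℕ) (i : ℕ) : ℕ :=
  if leftRun π i = 0 then 0
  else if leftRun π i = i - 1 then min (i - 1) l
  else min (leftRun π i - k) l

/-- `L(σ_i)`: the length of the longest consecutive run of `σ` ending at
position `i` all of whose entries are at most `σ_i`. -/
noncomputable def Lrun {n : ℕ} (σ : Fin n → ℕ) (i : ℕ) : ℕ :=
  @Nat.findGreatest
    (fun x => ∀ t ∈ Finset.Icc (i - x + 1) i, at1 σ t ≤ at1 σ i)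
    (fun _ => Classical.propDecidable _) n

/-
A car that ends up in spot `i` after preferring a spot `a > i` must have found `a` and every spot
strictly between `i` and `a` occupied, `i` itself free, and `a - i ≤ k`.  When car `π_i` arrives,
the occupied spots are exactly those holding cars with smaller labels, so the admissible `a` are
`i + 1, …, i + min(Right(π_i), k)`.
-/

theorem List.find?_map_sub_range_eq_some_iff (p : ℕ → Bool) (k a i : ℕ) (hia : i < a) :
    ((List.range k).map (fun j => a - (j + 1))).find? p = some i ↔
      a ≤ i + k ∧ p i ∧ ∀ t, i < t → t < a → ¬ p t := by
  induction k with
  | zero => simp; omega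
  | succ k ih =>
    rw [List.range_succ, List.map_append, List.find?_append, Option.or_eq_some_iff, ih]
    simp only [List.map_cons, List.map_nil, List.find?_eq_none, List.mem_map, List.mem_range,
      forall_exists_index, and_imp, forall_apply_eq_imp_iff₂, List.find?_cons, List.find?_nil]
    constructor
    · rintro (⟨hak, hpi, hbetween⟩ | ⟨hskipped, hlast⟩)
      · exact ⟨by omega, hpi, hbetween⟩
      · split at hlast <;> simp only [Option.some.injEq, reduceCtorEq] at hlast
        refine ⟨by omega, hlast ▸ ‹_›, fun t hit hta => ?_⟩
        simpa [show a - (a - t - 1 + 1) = t by omega] using hskipped (a - t - 1) (by omega)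
    · rintro ⟨hak, hpi, hbetween⟩
      by_cases hlt : a ≤ i + k
      · exact Or.inl ⟨hlt, hpi, hbetween⟩
      · refine Or.inr ⟨fun j hj => by simpa using hbetween _ (by omega) (by omega), ?_⟩
        simp [show a - (k + 1) = i by omega, hpi]

theorem pullTry_eq_some_of_lt_iff_find? (k l n : ℕ) (occ : Finset ℕ) {a i : ℕ} (hia : i < a) :
    pullTry k l n occ a = some i ↔
      a ∈ occ ∧ ((List.range k).map (fun j => a - (j + 1))).find?
        (fun s => decide (1 ≤ s ∧ s ∉ occ)) = some i := by
  unfold pullTry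
  by_cases ha : a ∈ occ
  · rw [if_neg (not_not.mpr ha)]
    split
    · rename_i hfind
      simp only [hfind, ha, true_and, Option.some.injEq]
    · rename_i hnone
      simp only [hnone, ha, true_and, reduceCtorEq, iff_false]
      intro hforward -- the forward search only visits spots beyond `a`
      have := List.mem_of_find?_eq_some hforward
      simp only [List.mem_map, List.mem_range] at this
      omega
  · rw [if_pos ha]
    simp only [Option.some.injEq, ha, false_and, iff_false]
    omega

theorem pullTry_eq_some_of_lt_iff (k l n : ℕ) (occ : Finset ℕ) {a i : ℕ} (hia : i < a) :
    pullTry k l n occ a = some i ↔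
      1 ≤ i ∧ i ∉ occ ∧ a ≤ i + k ∧ Finset.Ioc i a ⊆ occ := by
  have hIoc : Finset.Ioc i a ⊆ occ ↔ a ∈ occ ∧ ∀ t, i < t → t < a → t ∈ occ := by
    simp only [Finset.subset_iff, Finset.mem_Ioc]
    exact ⟨fun h => ⟨h ⟨hia, le_rfl⟩, fun t hit hta => h ⟨hit, hta.le⟩⟩,
      fun ⟨ha, h⟩ t ⟨hit, hta⟩ => (eq_or_lt_of_le hta).elim (· ▸ ha) (h t hit)⟩
  rw [pullTry_eq_some_of_lt_iff_find? k l n occ hia,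
    List.find?_map_sub_range_eq_some_iff _ _ _ _ hia, hIoc]
  simp only [decide_eq_true_eq, not_and, not_not]
  constructor
  · rintro ⟨ha, hak, ⟨hi, hiocc⟩, hbetween⟩
    exact ⟨hi, hiocc, hak, ha, fun t hit hta => hbetween t hit hta (by omega)⟩
  · rintro ⟨hi, hiocc, hak, ha, hbetween⟩
    exact ⟨ha, hak, ⟨hi, hiocc⟩, fun t hit hta _ => hbetween t hit hta⟩

theorem le_of_at1_pos {n : ℕ} {π : Fin n → ℕ} {t : ℕ} (ht : 0 < at1 π t) : t ≤ n := by
  unfold at1 at ht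
  split at ht <;> omega

theorem mem_occBefore_iff {n : ℕ} (π : Fin n → ℕ) (c t : ℕ) :
    t ∈ occBefore π c ↔ 0 < at1 π t ∧ at1 π t < c := by
  simp only [occBefore, Finset.mem_filter, Finset.mem_Icc, and_iff_right_iff_imp]
  intro ⟨ht, _⟩
  refine ⟨?_, le_of_at1_pos ht⟩
  unfold at1 at ht
  split at ht <;> omega

theorem le_rightRun_iff {n : ℕ} (π : Fin n → ℕ) (i x : ℕ) :
    x ≤ rightRun π i ↔ Finset.Ioc i (i + x) ⊆ occBefore π (at1 π i) := by
  have hIoc : Finset.Ioc i (i + x) = Finset.Icc (i + 1) (i + x) :=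
    (Finset.Icc_add_one_left_eq_Ioc i (i + x)).symm
  simp only [hIoc, Finset.subset_iff, mem_occBefore_iff]
  constructor
  · intro hx t ht
    refine Nat.findGreatest_spec (m := 0) (P := fun x =>
      ∀ t ∈ Finset.Icc (i + 1) (i + x), 0 < at1 π t ∧ at1 π t < at1 π i) (Nat.zero_le n)
      (by simp) t ?_
    simp only [Finset.mem_Icc] at ht ⊢
    unfold rightRun at hx
    omega
  · intro h
    rcases Nat.eq_zero_or_pos x with rfl | hx
    · exact Nat.zero_le _
    · have hxn : x ≤ n := by
        have := le_of_at1_pos (@h (i + x) (by simp only [Finset.mem_Icc]; omega)).1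
        omega
      exact Nat.le_findGreatest hxn h

theorem stmt11_general (k l n : ℕ) (π : Fin n → ℕ)
    (i : ℕ) (hi1 : 1 ≤ i) :
    ((Finset.Icc 1 n).filter
        (fun a => i < a ∧ pullTry k l n (occBefore π (at1 π i)) a = some i)).card
      = min (rightRun π i) k := by
  set occ := occBefore π (at1 π i)
  have hi : i ∉ occ := by simp [occ, mem_occBefore_iff]
  have hprefs : (Finset.Icc 1 n).filter (fun a => i < a ∧ pullTry k l n occ a = some i)
      = Finset.Icc (i + 1) (i + min (rightRun π i) k) := by
    ext a
    simp only [Finset.mem_filter, Finset.mem_Icc]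
    constructor
    · rintro ⟨-, hia, htry⟩
      obtain ⟨-, -, hak, hrun⟩ := (pullTry_eq_some_of_lt_iff k l n occ hia).mp htry
      have := (le_rightRun_iff π i (a - i)).mpr (by rwa [Nat.add_sub_cancel' hia.le])
      omega
    · rintro ⟨hia, hak⟩
      have hrun : Finset.Ioc i a ⊆ occ := by
        have := (le_rightRun_iff π i (a - i)).mp (by omega)
        rwa [Nat.add_sub_cancel' (by omega)] at this
      have han : a ≤ n :=
        le_of_at1_pos ((mem_occBefore_iff π _ a).mp (hrun (by simp only [Finset.mem_Ioc]; omega))).1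
      exact ⟨⟨by omega, han⟩, hia,
        (pullTry_eq_some_of_lt_iff k l n occ hia).mpr ⟨hi1, hi, by omega, hrun⟩⟩
  rw [hprefs, Nat.card_Icc]
  omega

theorem stmt11 (k l m n : ℕ) (hm : m ≤ n) (π : Fin n → ℕ)
    (hπ : π ∈ SmnSet m n) (i : ℕ) (hi1 : 1 ≤ i) (hin : i ≤ n)
    (hpos : 0 < at1 π i) :
    ((Finset.Icc 1 n).filter
        (fun a => i < a ∧ pullTry k l n (occBefore π (at1 π i)) a = some i)).card
      = min (rightRun π i) k :=
  stmt11_general k l n π i hi1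
end

section
/- Fix an outcome π ∈ S_{m,n} of the (k,ℓ)-pullback parking process and i ∈ [n] with π_i > 0. If car π_i parked in spot i by moving forward from an occupied preferred spot to its left (after failing to find an empty spot among the k spots behind its preference), then the number of possible preferences for car π_i equals: 0 if Left(π_i) = 0; min(i-1, ℓ) if Left(π_i) = i-1 > 0; and max(min(Left(π_i) - k, ℓ), 0) if 0 < Left(π_i) < i-1. Here Left(π_i) is the length of the longest consecutive subsequence π_y, ..., π_{i-1} with 0 < π_t < π_i for all y ≤ t ≤ i-1. -/
/-!
A car preferring `a < i` can only reach spot `i` by driving forward, which it does exactly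
when `a` is occupied, all spots from `max (a - k) 1` to `i - 1` are occupied, and
`i ≤ a + ℓ`. When car `π_i` arrives, the occupied spots directly left of `i` are the
`L = Left(π_i)` spots of the run, and the spot just before the run (if any) is free. So the
admissible preferences form the interval from `max (i - ℓ) (i - L + k)` (with `k` replaced by
`0` when the run reaches spot `1`) to `i - 1`, whose length is the stated formula.
-/

section pullTry

variable {k l n : ℕ} {occ : Finset ℕ} {a : ℕ}

lemma pullTry_eq_find?_forward (ha : a ∈ occ)
    (hback : ∀ t, a - k ≤ t → 1 ≤ t → t < a → t ∈ occ) :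
    pullTry k l n occ a =
      (List.range' (a + 1) l).find? (fun s => decide (s ≤ n ∧ s ∉ occ)) := by
  have hnone : ((List.range k).map (fun j => a - (j + 1))).find?
      (fun s => decide (1 ≤ s ∧ s ∉ occ)) = none := by
    simp only [List.find?_eq_none, List.mem_map, List.mem_range, decide_eq_true_eq, not_and,
      not_not]
    rintro _ ⟨j, hj, rfl⟩ h1
    exact hback _ (by omega) h1 (by omega)
  rw [pullTry, if_neg (not_not.mpr ha), hnone, List.range'_eq_map_range]
  simp only [Nat.add_comm 1, Nat.add_assoc]

lemma mem_and_backward_mem_of_pullTry_eq_some_gt {s : ℕ} (h : pullTry k l n occ a = some s)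
    (has : a < s) : a ∈ occ ∧ ∀ t, a - k ≤ t → 1 ≤ t → t < a → t ∈ occ := by
  by_cases ha : a ∈ occ
  swap
  · rw [pullTry, if_pos ha] at h; cases h; omega
  rw [pullTry, if_neg (not_not.mpr ha)] at h
  refine ⟨ha, ?_⟩
  split at h
  next s' hs' =>
    obtain ⟨j, -, rfl⟩ := List.mem_map.mp (List.mem_of_find?_eq_some hs')
    cases h; omega
  next hnone =>
    intro t ht1 ht2 ht3
    have := List.find?_eq_none.mp hnone t
      (List.mem_map.mpr ⟨a - t - 1, List.mem_range.mpr (by omega), by omega⟩)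
    simpa [ht2] using this

lemma pullTry_eq_some_iff_of_lt {i : ℕ} (hai : a < i) (hin : i ≤ n) (hi : i ∉ occ) :
    pullTry k l n occ a = some i ↔
      i ≤ a + l ∧ a ∈ occ ∧ ∀ t, a - k ≤ t → 1 ≤ t → t < i → t ∈ occ := by
  constructor
  · intro h
    obtain ⟨ha, hback⟩ := mem_and_backward_mem_of_pullTry_eq_some_gt h hai
    rw [pullTry_eq_find?_forward ha hback, List.find?_range'_eq_some, List.mem_range'_1] at h
    obtain ⟨-, hrange, hfwd⟩ := h
    refine ⟨by omega, ha, fun t ht1 ht2 ht3 => ?_⟩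
    rcases lt_trichotomy t a with hta | rfl | hta
    · exact hback t ht1 ht2 hta
    · exact ha
    · simpa [show t ≤ n by omega] using hfwd t hta ht3
  · rintro ⟨hil, ha, hocc⟩
    have hback : ∀ t, a - k ≤ t → 1 ≤ t → t < a → t ∈ occ :=
      fun t ht1 ht2 ht3 => hocc t ht1 ht2 (ht3.trans hai)
    rw [pullTry_eq_find?_forward ha hback, List.find?_range'_eq_some, List.mem_range'_1]
    refine ⟨by simp [hin, hi], by omega, fun t ht1 ht2 => ?_⟩
    simp [hocc t (by omega) (by omega) ht2]

end pullTry

section run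

variable {k l n : ℕ} {occ : Finset ℕ} {i L : ℕ}

lemma pullTry_eq_some_iff_of_run {a : ℕ} (ha1 : 1 ≤ a) (hai : a < i) (hin : i ≤ n)
    (hi : i ∉ occ) (hrun : ∀ t, i - L ≤ t → t < i → t ∈ occ)
    (hgap : L < i - 1 → i - L - 1 ∉ occ) :
    pullTry k l n occ a = some i ↔
      i ≤ a + l ∧ i - L ≤ a ∧ (L < i - 1 → i - L + k ≤ a) := by
  rw [pullTry_eq_some_iff_of_lt hai hin hi]
  constructor
  · rintro ⟨hil, -, hocc⟩
    have hgap_lt : L < i - 1 → a - k ≤ i - L - 1 → False := fun hL hak =>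
      hgap hL (hocc _ hak (by omega) (by omega))
    refine ⟨hil, ?_, fun hL => ?_⟩
    · by_contra! h
      exact hgap_lt (by omega) (by omega)
    · by_contra! h
      exact hgap_lt hL (by omega)
  · rintro ⟨hil, hLa, hk⟩
    refine ⟨hil, hrun a hLa hai, fun t ht1 ht2 ht3 => hrun t ?_ ht3⟩
    by_cases hL : L < i - 1
    · have := hk hL; omega
    · omega

lemma card_filter_pullTry_eq_some (hin : i ≤ n) (hi : i ∉ occ) (hL : L ≤ i - 1)
    (hrun : ∀ t, i - L ≤ t → t < i → t ∈ occ) (hgap : L < i - 1 → i - L - 1 ∉ occ) :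
    ((Finset.Icc 1 n).filter (fun a => a < i ∧ pullTry k l n occ a = some i)).card =
      if L = 0 then 0 else if L = i - 1 then min (i - 1) l else min (L - k) l := by
  have hmem : ∀ a,
      a ∈ (Finset.Icc 1 n).filter (fun a => a < i ∧ pullTry k l n occ a = some i) ↔
      1 ≤ a ∧ a < i ∧ i ≤ a + l ∧ i - L ≤ a ∧ (L < i - 1 → i - L + k ≤ a) := by
    intro a
    simp only [Finset.mem_filter, Finset.mem_Icc]
    constructor
    · rintro ⟨⟨ha1, -⟩, hai, h⟩
      exact ⟨ha1, hai, (pullTry_eq_some_iff_of_run ha1 hai hin hi hrun hgap).mp h⟩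
    · rintro ⟨ha1, hai, h⟩
      exact ⟨⟨ha1, by omega⟩, hai,
        (pullTry_eq_some_iff_of_run ha1 hai hin hi hrun hgap).mpr h⟩
  have card_eq : ∀ lo, (∀ a, (1 ≤ a ∧ a < i ∧ i ≤ a + l ∧ i - L ≤ a ∧
      (L < i - 1 → i - L + k ≤ a)) ↔ lo ≤ a ∧ a < i) →
      ((Finset.Icc 1 n).filter (fun a => a < i ∧ pullTry k l n occ a = some i)).card =
        i - lo := by
    intro lo hlo
    rw [← Nat.card_Ico lo i]
    congr 1
    ext a
    rw [hmem, hlo, Finset.mem_Ico]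
  split_ifs with h0 h1
  · rw [card_eq i fun a => by omega]; omega
  · rw [card_eq (max 1 (i - l)) fun a => by omega]; omega
  · rw [card_eq (max (i - L + k) (i - l)) fun a => by omega]; omega

end run

section leftRun

variable {n : ℕ} (π : Fin n → ℕ) {i : ℕ}

lemma mem_occBefore {c t : ℕ} : t ∈ occBefore π c ↔ 0 < at1 π t ∧ at1 π t < c := by
  unfold occBefore at1
  split_ifs with ht <;> simp [ht]

lemma notMem_occBefore_at1 : i ∉ occBefore π (at1 π i) := by
  simp [mem_occBefore]

lemma leftRun_spec (hi : 1 ≤ i) :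
    ∀ t ∈ Finset.Icc (i - leftRun π i) (i - 1), 0 < at1 π t ∧ at1 π t < at1 π i :=
  @Nat.findGreatest_spec 0 (fun x => ∀ t ∈ Finset.Icc (i - x) (i - 1), _)
    (fun _ => Classical.propDecidable _) n (Nat.zero_le n)
    fun t ht => by simp only [Finset.mem_Icc] at ht; omega

lemma leftRun_le_sub_one (hi : 1 ≤ i) : leftRun π i ≤ i - 1 := by
  by_contra! h
  have := (leftRun_spec π hi 0 (Finset.mem_Icc.mpr ⟨by omega, by omega⟩)).1
  simp [at1] at this

lemma mem_occBefore_of_leftRun (hi : 1 ≤ i) {t : ℕ} (ht1 : i - leftRun π i ≤ t)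
    (ht2 : t < i) :
    t ∈ occBefore π (at1 π i) :=
  (mem_occBefore π).mpr (leftRun_spec π hi t (Finset.mem_Icc.mpr ⟨ht1, by omega⟩))

lemma sub_leftRun_sub_one_notMem_occBefore (hi : 1 ≤ i) (hin : i ≤ n)
    (hL : leftRun π i < i - 1) :
    i - leftRun π i - 1 ∉ occBefore π (at1 π i) := by
  intro hmem
  have hnot := @Nat.findGreatest_is_greatest _
    (fun x => ∀ t ∈ Finset.Icc (i - x) (i - 1), 0 < at1 π t ∧ at1 π t < at1 π i)
    (fun _ => Classical.propDecidable _) n (Nat.lt_succ_self (leftRun π i))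
    (show leftRun π i + 1 ≤ n by omega)
  refine hnot fun t ht => ?_
  obtain ⟨ht1, ht2⟩ := Finset.mem_Icc.mp ht
  rcases eq_or_lt_of_le ht1 with rfl | hlt
  · exact (mem_occBefore π).mp (by rwa [Nat.sub_sub] at hmem)
  · exact leftRun_spec π hi t (Finset.mem_Icc.mpr ⟨by omega, ht2⟩)

end leftRun

theorem stmt12_general (k l n : ℕ) (π : Fin n → ℕ) (i : ℕ) (hi1 : 1 ≤ i) (hin : i ≤ n) :
    ((Finset.Icc 1 n).filter
        (fun a => a < i ∧ pullTry k l n (occBefore π (at1 π i)) a = some i)).card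
      = if leftRun π i = 0 then 0
        else if leftRun π i = i - 1 then min (i - 1) l
        else min (leftRun π i - k) l :=
  card_filter_pullTry_eq_some hin (notMem_occBefore_at1 π) (leftRun_le_sub_one π hi1)
    (fun _ => mem_occBefore_of_leftRun π hi1)
    (sub_leftRun_sub_one_notMem_occBefore π hi1 hin)

theorem stmt12 (k l m n : ℕ) (hm : m ≤ n) (π : Fin n → ℕ)
    (hπ : π ∈ SmnSet m n) (i : ℕ) (hi1 : 1 ≤ i) (hin : i ≤ n)
    (hpos : 0 < at1 π i) :
    ((Finset.Icc 1 n).filter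
        (fun a => a < i ∧ pullTry k l n (occBefore π (at1 π i)) a = some i)).card
      = if leftRun π i = 0 then 0
        else if leftRun π i = i - 1 then min (i - 1) l
        else min (leftRun π i - k) l :=
  stmt12_general k l n π i hi1 hin
end

section
/- For nonnegative integers k, ℓ and 1 ≤ m ≤ n, the number of (k,ℓ)-pullback (m,n)-parking functions equals the sum over all π ∈ S_{m,n} of the product over i = 1 to n of (B(π_i) + F(π_i) + 1). -/
/-!
Sort the parking functions by their outcome π, the arrangement recording which car parks in
which spot; the outcomes are exactly the arrangements in `S_{m,n}`. For a fixed outcome, car `c`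
parks at the spot `i` with `π_i = c` precisely when, with the spots of cars `1, …, c - 1`
occupied, its preference leads to `i`. These conditions are independent across cars, so the
fiber over π is a product. The spots occupied before car `π_i` arrives that are adjacent to `i`
form the maximal runs of smaller labels on either side of `i`, and the preferences leading to `i`
are exactly the interval `[i - F(π_i), i + B(π_i)]`.
-/

namespace Pullback

open Finset

section Search

variable {P : ℕ → Bool} {a k s : ℕ}

theorem find?_map_range_sub_eq_some (h0 : P 0 = false) :
    ((List.range k).map (fun j => a - (j + 1))).find? P = some s ↔
      s < a ∧ a ≤ s + k ∧ P s ∧ ∀ t, s < t → t < a → P t = false := by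
  simp only [List.find?_eq_some_iff_getElem, List.length_map, List.length_range,
    List.getElem_map, List.getElem_range, Bool.not_eq_eq_eq_not, Bool.not_true]
  constructor
  · rintro ⟨hs, j, hj, rfl, hmin⟩
    have : a - (j + 1) ≠ 0 := fun h => by simp [h, h0] at hs
    refine ⟨by omega, by omega, hs, fun t hst hta => ?_⟩
    simpa [show a - (a - t - 1 + 1) = t by omega] using hmin (a - t - 1) (by omega)
  · rintro ⟨hsa, hak, hs, hmin⟩
    refine ⟨hs, a - s - 1, by omega, by omega, fun j hj => hmin _ (by omega) (by omega)⟩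

theorem find?_map_range_sub_eq_none (h0 : P 0 = false) :
    ((List.range k).map (fun j => a - (j + 1))).find? P = none ↔
      ∀ t, t < a → a ≤ t + k → P t = false := by
  simp only [List.find?_eq_none, List.mem_map, List.mem_range, Bool.not_eq_true]
  constructor
  · rintro h t hta hak
    exact h t ⟨a - t - 1, by omega, by omega⟩
  · rintro h _ ⟨j, hj, rfl⟩
    by_cases hz : a - (j + 1) = 0
    · rw [hz, h0]
    · exact h _ (by omega) (by omega)

theorem find?_map_range_add_eq_some :
    ((List.range k).map (fun j => a + (j + 1))).find? P = some s ↔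
      a < s ∧ s ≤ a + k ∧ P s ∧ ∀ t, a < t → t < s → P t = false := by
  simp only [List.find?_eq_some_iff_getElem, List.length_map, List.length_range,
    List.getElem_map, List.getElem_range, Bool.not_eq_eq_eq_not, Bool.not_true]
  constructor
  · rintro ⟨hs, j, hj, rfl, hmin⟩
    refine ⟨by omega, by omega, hs, fun t hat hts => ?_⟩
    simpa [show a + (t - a - 1 + 1) = t by omega] using hmin (t - a - 1) (by omega)
  · rintro ⟨has, hsk, hs, hmin⟩
    refine ⟨hs, s - a - 1, by omega, by omega, fun j hj => hmin _ (by omega) (by omega)⟩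

end Search

section Rule

variable {k l n : ℕ}

theorem pullTry_eq_some_iff {occ : Finset ℕ} {a i : ℕ} :
    pullTry k l n occ a = some i ↔
      (a ∉ occ ∧ i = a) ∨
      (a ∈ occ ∧ i < a ∧ a ≤ i + k ∧ 1 ≤ i ∧ i ∉ occ ∧ ∀ t, i < t → t < a → t ∈ occ) ∨
      (a ∈ occ ∧ a < i ∧ i ≤ a + l ∧ i ≤ n ∧ i ∉ occ ∧ (∀ t, a < t → t < i → t ∈ occ) ∧
        ∀ t, t < a → a ≤ t + k → 1 ≤ t → t ∈ occ) := by
  have h0 : decide (1 ≤ 0 ∧ 0 ∉ occ) = false := by simp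
  unfold pullTry
  by_cases ha : a ∈ occ
  swap
  · simp [ha, eq_comm]
  simp only [ha, not_true_eq_false, if_false, true_and, false_and, false_or]
  split
  next s hs =>
    obtain ⟨hsa, has, hfree, hrun⟩ := (find?_map_range_sub_eq_some h0).mp hs
    simp only [decide_eq_true_eq, decide_eq_false_iff_not, not_and, not_not] at hfree hrun
    constructor
    · rintro ⟨⟩
      exact Or.inl ⟨hsa, has, hfree.1, hfree.2, fun t hst hta => hrun t hst hta (by omega)⟩
    · rintro (⟨hia, _, hi1, hi, hrun'⟩ | ⟨_, _, _, _, _, hback⟩)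
      · obtain hlt | rfl | hgt := lt_trichotomy s i
        · exact absurd (hrun i hlt hia hi1) hi
        · rfl
        · exact absurd (hrun' s hgt hsa) hfree.2
      · exact absurd (hback s hsa has hfree.1) hfree.2
  next hs =>
    have hback := (find?_map_range_sub_eq_none h0).mp hs
    simp only [decide_eq_false_iff_not, not_and, not_not] at hback
    rw [find?_map_range_add_eq_some]
    simp only [decide_eq_true_eq, decide_eq_false_iff_not, not_and, not_not]
    constructor
    · rintro ⟨hai, hil, ⟨hin, hi⟩, hrun⟩
      exact Or.inr ⟨hai, hil, hin, hi, fun t hat hti => hrun t hat hti (by omega), hback⟩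
    · rintro (⟨hia, hak, hi1, hi, _⟩ | ⟨hai, hil, hin, hi, hrun, _⟩)
      · exact absurd (hback i hia hak hi1) hi
      · exact ⟨hai, hil, ⟨hin, hi⟩, fun t hat hti _ => hrun t hat hti⟩

/-- `R` and `L` are the lengths of the maximal runs of occupied spots just right and just left of
the free spot `i`. A car preferring `a < i` reaches `i` only after its backward search fails, that
is when the left run reaches spot `1` or extends at least `k` spots beyond `a`. -/
theorem pullTry_eq_some_iff_of_runs {occ : Finset ℕ} {i R L a : ℕ}
    (hi1 : 1 ≤ i) (hin : i ≤ n) (hi : i ∉ occ)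
    (hR : ∀ t, i < t → t ≤ i + R → t ∈ occ) (hRend : i + R + 1 ∉ occ)
    (hLi : L < i) (hL : ∀ t, i - L ≤ t → t < i → t ∈ occ) (hLend : i - (L + 1) ∉ occ) :
    pullTry k l n occ a = some i ↔
      i - (if L = i - 1 then min (i - 1) l else min (L - k) l) ≤ a ∧ a ≤ i + min R k := by
  rw [pullTry_eq_some_iff]
  obtain hai | rfl | hia := lt_trichotomy a i
  · constructor
    · rintro (⟨-, h⟩ | ⟨-, h, -⟩ | ⟨ha, -, hil, -, -, hrun, hback⟩)
      · omega
      · omega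
      have hLa : i - L ≤ a := by
        by_contra
        exact hLend <| (eq_or_lt_of_le (show a ≤ i - (L + 1) by omega)).elim
          (· ▸ ha) (hrun _ · (by omega))
      refine ⟨?_, by omega⟩
      split_ifs
      · omega
      · have : i - (L + 1) + k < a := by
          by_contra
          exact hLend (hback _ (by omega) (by omega) (by omega))
        omega
    · rintro ⟨h, -⟩
      have hLa : i - L ≤ a := by split_ifs at h <;> omega
      refine Or.inr (Or.inr ⟨hL a hLa hai, hai, by split_ifs at h <;> omega, hin, hi,
        fun t hat hti => hL t (by omega) hti, fun t hta hak _ => hL t ?_ (by omega)⟩)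
      split_ifs at h <;> omega
  · simp [hi]
  · constructor
    · rintro (⟨-, h⟩ | ⟨ha, -, hak, -, -, hrun⟩ | ⟨-, h, -⟩)
      · omega
      · have : a ≤ i + R := by
          by_contra
          exact hRend <| (eq_or_lt_of_le (show i + R + 1 ≤ a by omega)).elim
            (· ▸ ha) (hrun _ (by omega))
        refine ⟨by split_ifs <;> omega, by omega⟩
      · omega
    · rintro ⟨-, h⟩
      exact Or.inr (Or.inl ⟨hR a hia (by omega), hia, by omega, hi1, hi,
        fun t hit hta => hR t hit (by omega)⟩)

theorem pullTry_eq_some_bounds {occ : Finset ℕ} {a s : ℕ} (h : pullTry k l n occ a = some s)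
    (ha1 : 1 ≤ a) (han : a ≤ n) : s ∉ occ ∧ 1 ≤ s ∧ s ≤ n := by
  rcases pullTry_eq_some_iff.mp h with ⟨ha, rfl⟩ | ⟨-, hsa, -, hs1, hs, -⟩ |
    ⟨-, has, -, hsn, hs, -⟩
  · exact ⟨ha, ha1, han⟩
  · exact ⟨hs, hs1, by omega⟩
  · exact ⟨hs, by omega, hsn⟩

end Rule

section Runs

variable {n : ℕ} (π : Fin n → ℕ)

theorem at1_coe (i : Fin n) : at1 π ((i : ℕ) + 1) = π i := by
  simp [at1]

theorem mem_Icc_of_at1_pos {t : ℕ} (h : 0 < at1 π t) : 1 ≤ t ∧ t ≤ n := by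
  by_contra ht
  simp [at1, ht] at h

theorem mem_occBefore {c t : ℕ} : t ∈ occBefore π c ↔ 0 < at1 π t ∧ at1 π t < c := by
  simp only [occBefore, mem_filter, mem_Icc, and_iff_right_iff_imp]
  exact fun h => mem_Icc_of_at1_pos π h.1

variable (i : ℕ)

theorem self_notMem_occBefore : i ∉ occBefore π (at1 π i) := by
  simp [mem_occBefore]

theorem mem_occBefore_of_lt_of_le_add_rightRun {t : ℕ} (hit : i < t) (ht : t ≤ i + rightRun π i) :
    t ∈ occBefore π (at1 π i) :=
  (mem_occBefore π).mpr <| Nat.findGreatest_spec (P := fun x => ∀ t ∈ Icc (i + 1) (i + x),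
    0 < at1 π t ∧ at1 π t < at1 π i) (Nat.zero_le n) (by simp) t (mem_Icc.mpr ⟨hit, ht⟩)

theorem add_rightRun_add_one_notMem_occBefore : i + rightRun π i + 1 ∉ occBefore π (at1 π i) := by
  intro h
  have hn := (mem_Icc_of_at1_pos π ((mem_occBefore π).mp h).1).2
  refine Nat.findGreatest_is_greatest (P := fun x => ∀ t ∈ Icc (i + 1) (i + x),
    0 < at1 π t ∧ at1 π t < at1 π i) (Nat.lt_succ_self (rightRun π i)) (by omega) ?_
  intro t ht
  rw [mem_Icc] at ht
  rw [← mem_occBefore]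
  rcases Nat.lt_or_ge (i + rightRun π i) t with ht' | ht'
  · rwa [show t = i + rightRun π i + 1 by omega]
  · exact mem_occBefore_of_lt_of_le_add_rightRun π i (by omega) ht'

theorem add_rightRun_le (hin : i ≤ n) : i + rightRun π i ≤ n := by
  rcases Nat.eq_zero_or_pos (rightRun π i) with h | h
  · omega
  · exact (mem_Icc_of_at1_pos π ((mem_occBefore π).mp
      (mem_occBefore_of_lt_of_le_add_rightRun π i (by omega) le_rfl)).1).2

-- `leftRun` is built with the classical decidability instance, so it has to be passed explicitly.
theorem mem_occBefore_of_sub_leftRun_le_of_lt {t : ℕ} (ht : i - leftRun π i ≤ t) (hti : t < i) :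
    t ∈ occBefore π (at1 π i) :=
  (mem_occBefore π).mpr <| @Nat.findGreatest_spec 0 (fun x => ∀ t ∈ Icc (i - x) (i - 1),
    0 < at1 π t ∧ at1 π t < at1 π i) (fun _ => Classical.propDecidable _) n (Nat.zero_le n)
    (by intro t ht; simp at ht; omega) t (mem_Icc.mpr ⟨ht, by omega⟩)

theorem leftRun_lt (hi : 1 ≤ i) : leftRun π i < i := by
  by_contra h
  have h0 := mem_occBefore_of_sub_leftRun_le_of_lt π i (t := 0) (by omega) (by omega)
  simp [mem_occBefore, at1] at h0

theorem sub_leftRun_add_one_notMem_occBefore (hin : i ≤ n) :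
    i - (leftRun π i + 1) ∉ occBefore π (at1 π i) := by
  intro h
  have h1 := (mem_Icc_of_at1_pos π ((mem_occBefore π).mp h).1).1
  refine @Nat.findGreatest_is_greatest _ (fun x => ∀ t ∈ Icc (i - x) (i - 1),
    0 < at1 π t ∧ at1 π t < at1 π i) (fun _ => Classical.propDecidable _) n
    (Nat.lt_succ_self (leftRun π i)) (by omega) ?_
  intro t ht
  rw [mem_Icc] at ht
  rw [← mem_occBefore]
  rcases Nat.lt_or_ge t (i - leftRun π i) with ht' | ht'
  · rwa [show t = i - (leftRun π i + 1) by omega]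
  · exact mem_occBefore_of_sub_leftRun_le_of_lt π i ht' (by omega)

/-- The paper's case `Left(π_i) = 0` is absorbed: both branches then give `0`. -/
theorem Fval_eq_ite (k l : ℕ) : Fval k l π i =
    if leftRun π i = i - 1 then min (i - 1) l else min (leftRun π i - k) l := by
  unfold Fval
  split_ifs <;> omega

theorem Bval_add_Fval_eq_zero (k l : ℕ) (hi : 1 ≤ i) (h : at1 π i = 0) :
    Bval k π i + Fval k l π i = 0 := by
  have hR : rightRun π i = 0 := by
    by_contra hR
    simpa [mem_occBefore, h] using
      mem_occBefore_of_lt_of_le_add_rightRun π i (t := i + 1) (by omega) (by omega)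
  have hL : leftRun π i = 0 := by
    by_contra hL
    simpa [mem_occBefore, h] using
      mem_occBefore_of_sub_leftRun_le_of_lt π i (t := i - 1) (by omega) (by omega)
  simp [Bval, Fval, hR, hL]

theorem pullTry_occBefore_eq_some_iff (k l : ℕ) (hi1 : 1 ≤ i) (hin : i ≤ n) {a : ℕ} :
    pullTry k l n (occBefore π (at1 π i)) a = some i ↔
      i - Fval k l π i ≤ a ∧ a ≤ i + Bval k π i := by
  rw [Fval_eq_ite, Bval]
  exact pullTry_eq_some_iff_of_runs hi1 hin (self_notMem_occBefore π i)
    (fun _ => mem_occBefore_of_lt_of_le_add_rightRun π i)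
    (add_rightRun_add_one_notMem_occBefore π i)
    (leftRun_lt π i hi1) (fun _ => mem_occBefore_of_sub_leftRun_le_of_lt π i)
    (sub_leftRun_add_one_notMem_occBefore π i hin)

theorem card_pullTry_occBefore_eq_some (k l : ℕ) (hi1 : 1 ≤ i) (hin : i ≤ n) :
    #{a : Fin n | pullTry k l n (occBefore π (at1 π i)) (a + 1) = some i}
      = Bval k π i + Fval k l π i + 1 := by
  have hF : Fval k l π i < i := by
    have := leftRun_lt π i hi1
    rw [Fval_eq_ite]
    split_ifs <;> omega
  have hB : i + Bval k π i ≤ n := by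
    have := add_rightRun_le π i hin
    rw [Bval]
    omega
  have hIcc : ({a : Fin n | pullTry k l n (occBefore π (at1 π i)) (a + 1) = some i} : Finset _) =
      Icc ⟨i - Fval k l π i - 1, by omega⟩ ⟨i + Bval k π i - 1, by omega⟩ := by
    ext a
    simp only [mem_filter, mem_univ, true_and, mem_Icc, Fin.le_def,
      pullTry_occBefore_eq_some_iff π i k l hi1 hin]
    omega
  rw [hIcc, Fin.card_Icc]
  simp only
  omega

end Runs

section Parking

variable {k l m n : ℕ}

theorem pullRunAux_cons_eq_some_iff {a s : ℕ} {rest T : List ℕ} {occ : Finset ℕ} :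
    pullRunAux k l n (a :: rest) occ = some (s :: T) ↔
      pullTry k l n occ a = some s ∧ pullRunAux k l n rest (insert s occ) = some T := by
  simp only [pullRunAux]
  split <;> simp_all [eq_comm, and_comm]

theorem pullRunAux_eq_some_iff :
    ∀ (prefs : List ℕ) (occ : Finset ℕ) (S : List ℕ),
      pullRunAux k l n prefs occ = some S ↔ S.length = prefs.length ∧
        ∀ j < prefs.length,
          pullTry k l n (occ ∪ (S.take j).toFinset) (prefs.getD j 0) = some (S.getD j 0)
  | [], occ, S => by simp [pullRunAux, eq_comm]
  | a :: rest, occ, [] => by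
    simp only [pullRunAux]
    split <;> simp
  | a :: rest, occ, s :: T => by
    rw [pullRunAux_cons_eq_some_iff, pullRunAux_eq_some_iff rest, List.length_cons,
      List.length_cons, Nat.forall_lt_succ_left]
    simp [union_insert, insert_union, and_left_comm]

theorem nodup_of_pullRunAux_eq_some : ∀ {prefs : List ℕ} {occ : Finset ℕ} {S : List ℕ},
    pullRunAux k l n prefs occ = some S → (∀ a ∈ prefs, 1 ≤ a ∧ a ≤ n) →
      S.Nodup ∧ ∀ s ∈ S, s ∉ occ ∧ 1 ≤ s ∧ s ≤ n
  | [], _, _, h, _ => by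
    cases Option.some_inj.mp h
    simp
  | a :: rest, occ, [], h, _ => by
    simp only [pullRunAux] at h
    split at h <;> simp at h
  | a :: rest, occ, s :: T, h, hp => by
    obtain ⟨hs, hT⟩ := pullRunAux_cons_eq_some_iff.mp h
    obtain ⟨hocc, hs1, hsn⟩ := pullTry_eq_some_bounds hs (hp a (by simp)).1 (hp a (by simp)).2
    obtain ⟨hnd, hmem⟩ := nodup_of_pullRunAux_eq_some hT fun b hb => hp b (by simp [hb])
    refine ⟨List.nodup_cons.mpr ⟨fun h => (hmem s h).1 (mem_insert_self _ _), hnd⟩, ?_⟩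
    simp only [List.mem_cons, forall_eq_or_imp]
    exact ⟨⟨hocc, hs1, hsn⟩, fun t ht => ⟨fun h => (hmem t ht).1 (mem_insert_of_mem h),
      (hmem t ht).2⟩⟩

@[simp] theorem length_prefList (α : Fin m → Fin n) : (prefList α).length = m := by
  simp [prefList]

theorem getD_prefList (α : Fin m → Fin n) (j : Fin m) : (prefList α).getD j 0 = α j + 1 := by
  simp [prefList]

theorem nodup_of_pullRun_prefList_eq_some {α : Fin m → Fin n} {S : List ℕ}
    (h : pullRun k l n (prefList α) = some S) :
    S.Nodup ∧ S.length = m ∧ ∀ s ∈ S, 1 ≤ s ∧ s ≤ n := by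
  obtain ⟨hnd, hmem⟩ := nodup_of_pullRunAux_eq_some h fun a ha => by
    obtain ⟨j, rfl⟩ := List.mem_ofFn.mp ha
    exact ⟨by omega, (α j).isLt⟩
  exact ⟨hnd, by simpa using ((pullRunAux_eq_some_iff _ _ _).mp h).1, fun s hs => (hmem s hs).2⟩

end Parking

section Arrangements

variable {m n : ℕ}

theorem count_replicate_add_map_range (c : ℕ) :
    Multiset.count c (Multiset.replicate (n - m) 0 + (Multiset.range m).map (· + 1))
      = if c = 0 then n - m else if c ≤ m then 1 else 0 := by
  rcases c with _ | c
  · simp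
  · rw [Multiset.count_add, Multiset.count_map_eq_count' _ _ (add_left_injective 1),
      Multiset.count_eq_of_nodup (Multiset.nodup_range m)]
    simp [Multiset.mem_replicate]

theorem count_map_univ (π : Fin n → ℕ) (c : ℕ) :
    Multiset.count c (univ.val.map π) = #{i | π i = c} := by
  rw [Multiset.count_map, card_def, filter_val]
  simp [eq_comm]

variable {π : Fin n → ℕ}

theorem mem_SmnSet_iff : π ∈ SmnSet m n ↔
    ∀ c, #{i | π i = c} = if c = 0 then n - m else if c ≤ m then 1 else 0 := by
  simp only [← count_map_univ, ← count_replicate_add_map_range (m := m), ← Multiset.ext]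
  rw [SmnSet, mem_filter, and_iff_right_iff_imp]
  intro h
  refine mem_image.mpr ⟨fun i => ⟨π i, ?_⟩, mem_univ _, rfl⟩
  have hcount := congrArg (Multiset.count (π i)) h
  rw [count_map_univ, count_replicate_add_map_range] at hcount
  have : 0 < #{j | π j = π i} := card_pos.mpr ⟨i, by simp⟩
  split_ifs at hcount <;> omega

theorem existsUnique_of_mem_SmnSet (hπ : π ∈ SmnSet m n) {c : ℕ}
    (hc : 1 ≤ c) (hcm : c ≤ m) : ∃! i, π i = c := by
  rw [Fintype.existsUnique_iff_card_one, mem_SmnSet_iff.mp hπ c, if_neg (by omega), if_pos hcm]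

theorem le_of_mem_SmnSet (hπ : π ∈ SmnSet m n) (i : Fin n) : π i ≤ m := by
  have h := mem_SmnSet_iff.mp hπ (π i)
  have : 0 < #{j | π j = π i} := card_pos.mpr ⟨i, by simp⟩
  split_ifs at h <;> omega

theorem at1_eq_iff {c t : ℕ} (hc : 0 < c) :
    at1 π t = c ↔ ∃ i : Fin n, π i = c ∧ t = i + 1 := by
  constructor
  · rintro rfl
    obtain ⟨h1, hn⟩ := mem_Icc_of_at1_pos π hc
    refine ⟨⟨t - 1, by omega⟩, ?_, by simp; omega⟩
    rw [← at1_coe π]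
    congr 1
    simp only
    omega
  · rintro ⟨i, rfl, rfl⟩
    exact at1_coe π i

/-- The `1`-based spot labelled `c` in `π`, and `0` if there is none. -/
noncomputable def spot (π : Fin n → ℕ) (c : ℕ) : ℕ :=
  if h : ∃ i, π i = c then ((Classical.choose h : Fin n) : ℕ) + 1 else 0

theorem at1_eq_iff_eq_spot (hπ : π ∈ SmnSet m n) {c t : ℕ} (hc : 1 ≤ c) (hcm : c ≤ m) :
    at1 π t = c ↔ t = spot π c := by
  obtain ⟨i, hi, huniq⟩ := existsUnique_of_mem_SmnSet hπ hc hcm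
  have hspot : spot π c = i + 1 := by
    have h : ∃ j, π j = c := ⟨i, hi⟩
    rw [spot, dif_pos h, huniq _ (Classical.choose_spec h)]
  rw [hspot, at1_eq_iff (by omega)]
  exact ⟨fun ⟨j, hj, ht⟩ => huniq j hj ▸ ht, fun ht => ⟨i, hi, ht⟩⟩

theorem at1_le_of_mem_SmnSet (hπ : π ∈ SmnSet m n) (t : ℕ) : at1 π t ≤ m := by
  unfold at1
  split
  · exact le_of_mem_SmnSet hπ _
  · exact Nat.zero_le m

theorem at1_spot_succ (hπ : π ∈ SmnSet m n) (j : Fin m) : at1 π (spot π (j + 1)) = j + 1 :=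
  (at1_eq_iff_eq_spot hπ (by omega) (by omega)).mpr rfl

theorem spot_succ_mem_Icc (hπ : π ∈ SmnSet m n) (j : Fin m) : spot π (j + 1) ∈ Icc 1 n :=
  mem_Icc.mpr <| mem_Icc_of_at1_pos π (by rw [at1_spot_succ hπ]; omega)

theorem spot_succ_injective (hπ : π ∈ SmnSet m n) :
    Function.Injective fun j : Fin m => spot π (j + 1) := fun a b hab => by
  have := congrArg (at1 π) hab
  simp only [at1_spot_succ hπ] at this
  exact Fin.ext (by omega)

theorem prod_Icc_eq_prod_spot {M : Type*} [CommMonoid M] (hπ : π ∈ SmnSet m n)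
    (f : ℕ → M) (hf : ∀ i ∈ Icc 1 n, at1 π i = 0 → f i = 1) :
    ∏ i ∈ Icc 1 n, f i = ∏ j : Fin m, f (spot π (j + 1)) := by
  rw [← prod_filter_of_ne (p := fun i => 0 < at1 π i)
    fun i hi hfi => Nat.pos_of_ne_zero fun h0 => hfi (hf i hi h0)]
  symm
  refine prod_nbij (fun j => spot π (j + 1)) (fun j _ => ?_) (spot_succ_injective hπ).injOn
    (fun i hi => ?_) fun _ _ => rfl
  · exact mem_filter.mpr ⟨spot_succ_mem_Icc hπ j, by rw [at1_spot_succ hπ]; omega⟩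
  · have hi := (mem_filter.mp hi).2
    have hm := at1_le_of_mem_SmnSet hπ i
    refine ⟨⟨at1 π i - 1, by omega⟩, mem_univ _, ?_⟩
    simp only [show at1 π i - 1 + 1 = at1 π i by omega]
    exact ((at1_eq_iff_eq_spot hπ (by omega) hm).mp rfl).symm

noncomputable def spotsList (m : ℕ) (π : Fin n → ℕ) : List ℕ :=
  List.ofFn fun j : Fin m => spot π (j + 1)

theorem spotsList_nodup (hπ : π ∈ SmnSet m n) : (spotsList m π).Nodup :=
  List.nodup_ofFn.mpr (spot_succ_injective hπ)

theorem take_spotsList_toFinset (hπ : π ∈ SmnSet m n) {j : ℕ} (hj : j ≤ m) :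
    ((spotsList m π).take j).toFinset = occBefore π (j + 1) := by
  ext t
  simp only [spotsList, List.mem_toFinset, List.mem_take_iff_getElem, List.length_ofFn,
    List.getElem_ofFn, mem_occBefore]
  constructor
  · rintro ⟨i, hi, rfl⟩
    rw [at1_spot_succ hπ ⟨i, by omega⟩]
    dsimp only
    omega
  · rintro ⟨h0, hlt⟩
    exact ⟨at1 π t - 1, by omega,
      ((at1_eq_iff_eq_spot hπ (by omega) (by omega)).mp (by omega)).symm⟩

end Arrangements

section Outcomes

variable {m n : ℕ}

theorem outcomeOf_eq_getD (S : List ℕ) (t : ℕ) :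
    outcomeOf S t = ((S.idxOf? t).map (· + 1)).getD 0 := by
  unfold outcomeOf List.idxOf?
  cases S.findIdx? (· == t) <;> rfl

theorem outcomeOf_eq_zero_iff {S : List ℕ} {t : ℕ} : outcomeOf S t = 0 ↔ t ∉ S := by
  rw [outcomeOf_eq_getD, ← List.idxOf?_eq_none_iff]
  cases S.idxOf? t <;> simp

theorem outcomeOf_eq_succ_iff {S : List ℕ} (hS : S.Nodup) {t j : ℕ} :
    outcomeOf S t = j + 1 ↔ S[j]? = some t := by
  rw [outcomeOf_eq_getD]
  trans S.idxOf? t = some j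
  · cases S.idxOf? t <;> simp
  rw [List.idxOf?_eq_some_iff, List.getElem?_eq_some_iff]
  refine ⟨fun ⟨h, ht, _⟩ => ⟨h, ht⟩, fun ⟨h, ht⟩ => ⟨h, ht, fun j' hj' ht' => ?_⟩⟩
  have := (hS.getElem_inj_iff).mp (ht'.trans ht.symm)
  omega

def outcomeOfSpots (n : ℕ) (S : List ℕ) : Fin n → ℕ :=
  fun i => outcomeOf S (i + 1)

variable {S : List ℕ}

theorem at1_outcomeOfSpots (hb : ∀ s ∈ S, 1 ≤ s ∧ s ≤ n) (t : ℕ) :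
    at1 (outcomeOfSpots n S) t = outcomeOf S t := by
  by_cases ht : 1 ≤ t ∧ t ≤ n
  · simp only [at1, dif_pos ht, outcomeOfSpots]
    congr 1
    omega
  · rw [at1, dif_neg ht, eq_comm, outcomeOf_eq_zero_iff]
    exact fun h => ht (hb t h)

theorem outcomeOfSpots_mem_SmnSet (hS : S.Nodup) (hlen : S.length = m)
    (hb : ∀ s ∈ S, 1 ≤ s ∧ s ≤ n) : outcomeOfSpots n S ∈ SmnSet m n := by
  rw [mem_SmnSet_iff]
  rintro (_ | j)
  · have hocc : #{i : Fin n | (i : ℕ) + 1 ∈ S} = m := by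
      rw [← hlen, ← List.toFinset_card_of_nodup hS]
      refine card_nbij (fun i => (i : ℕ) + 1) (fun i hi => by simpa using hi)
        (fun a _ b _ h => Fin.ext (by simpa using h)) fun s hs => ?_
      have := hb s (List.mem_toFinset.mp hs)
      exact ⟨⟨s - 1, by omega⟩, by simpa [show s - 1 + 1 = s by omega] using hs, by simp; omega⟩
    have := card_filter_add_card_filter_not (s := univ) (fun i : Fin n => (i : ℕ) + 1 ∈ S)
    simp only [card_univ, Fintype.card_fin, hocc] at this
    simp only [outcomeOfSpots, outcomeOf_eq_zero_iff, if_pos]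
    omega
  · simp only [outcomeOfSpots, outcomeOf_eq_succ_iff hS, Nat.add_eq_zero_iff, one_ne_zero,
      and_false, if_false, Nat.add_one_le_iff]
    split_ifs with hj
    · have hS' := hb S[j] (List.getElem_mem (by omega))
      rw [card_eq_one]
      refine ⟨⟨S[j] - 1, by omega⟩, ?_⟩
      ext i
      simp [List.getElem?_eq_getElem (show j < S.length by omega), Fin.ext_iff]
      omega
    · simp [List.getElem?_eq_none (show S.length ≤ j by omega)]

variable {π : Fin n → ℕ}

theorem outcomeOfSpots_spotsList (hπ : π ∈ SmnSet m n) :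
    outcomeOfSpots n (spotsList m π) = π := by
  funext i
  obtain hi | ⟨j, hj⟩ : π i = 0 ∨ ∃ j, π i = j + 1 := by cases π i <;> simp
  · rw [hi, outcomeOfSpots, outcomeOf_eq_zero_iff]
    simp only [spotsList, List.mem_ofFn, not_exists]
    intro j hj
    have := at1_spot_succ hπ j
    rw [hj, at1_coe, hi] at this
    omega
  · have hjm := le_of_mem_SmnSet hπ i
    rw [hj, outcomeOfSpots, outcomeOf_eq_succ_iff (spotsList_nodup hπ)]
    simp only [spotsList, List.getElem?_ofFn, dif_pos (show j < m by omega), Option.some_inj]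
    rw [eq_comm, ← at1_eq_iff_eq_spot hπ (by omega) (by omega), at1_coe, hj]

theorem eq_spotsList_of_outcomeOfSpots_eq (hπ : π ∈ SmnSet m n) (hS : S.Nodup)
    (hlen : S.length = m) (hb : ∀ s ∈ S, 1 ≤ s ∧ s ≤ n) (h : outcomeOfSpots n S = π) :
    S = spotsList m π := by
  refine List.ext_getElem (by simp [spotsList, hlen]) fun j h1 h2 => ?_
  simp only [spotsList, List.getElem_ofFn]
  rw [← at1_eq_iff_eq_spot hπ (by omega) (by omega), ← h, at1_outcomeOfSpots hb,
    outcomeOf_eq_succ_iff hS, List.getElem?_eq_getElem h1]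

end Outcomes

section Fibers

variable {k l m n : ℕ}

theorem pullOutcome_eq {α : Fin m → Fin n} {S : List ℕ} (h : pullRun k l n (prefList α) = some S) :
    pullOutcome k l n α = outcomeOfSpots n S := by
  unfold pullOutcome outcomeOfSpots
  rw [h, Option.getD_some]

theorem pullOutcome_mem_SmnSet {α : Fin m → Fin n} (hα : α ∈ pullPFs k l m n) :
    pullOutcome k l n α ∈ SmnSet m n := by
  obtain ⟨S, hS⟩ := Option.isSome_iff_exists.mp (mem_filter.mp hα).2
  obtain ⟨hnd, hlen, hb⟩ := nodup_of_pullRun_prefList_eq_some hS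
  rw [pullOutcome_eq hS]
  exact outcomeOfSpots_mem_SmnSet hnd hlen hb

theorem mem_pullPFs_and_pullOutcome_eq_iff {π : Fin n → ℕ} (hπ : π ∈ SmnSet m n)
    (α : Fin m → Fin n) : (α ∈ pullPFs k l m n ∧ pullOutcome k l n α = π) ↔
      pullRun k l n (prefList α) = some (spotsList m π) := by
  constructor
  · rintro ⟨hα, hout⟩
    obtain ⟨S, hS⟩ := Option.isSome_iff_exists.mp (mem_filter.mp hα).2
    obtain ⟨hnd, hlen, hb⟩ := nodup_of_pullRun_prefList_eq_some hS
    rw [hS, eq_spotsList_of_outcomeOfSpots_eq hπ hnd hlen hb (pullOutcome_eq hS ▸ hout)]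
  · intro h
    refine ⟨mem_filter.mpr ⟨mem_univ _, by simp [h]⟩, ?_⟩
    rw [pullOutcome_eq h, outcomeOfSpots_spotsList hπ]

theorem filter_pullOutcome_eq {π : Fin n → ℕ} (hπ : π ∈ SmnSet m n) :
    {α ∈ pullPFs k l m n | pullOutcome k l n α = π} = Fintype.piFinset fun j : Fin m =>
      {a : Fin n | pullTry k l n (occBefore π (j + 1)) (a + 1) = some (spot π (j + 1))} := by
  ext α
  rw [mem_filter, mem_pullPFs_and_pullOutcome_eq_iff hπ, pullRun, pullRunAux_eq_some_iff,
    Fintype.mem_piFinset]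
  simp only [length_prefList, spotsList, List.length_ofFn, true_and, empty_union, mem_filter,
    mem_univ, Fin.forall_iff]
  refine forall₂_congr fun j hj => ?_
  rw [← spotsList, take_spotsList_toFinset hπ hj.le, getD_prefList α ⟨j, hj⟩]
  simp [spotsList, hj]

theorem card_filter_pullOutcome_eq {π : Fin n → ℕ} (hπ : π ∈ SmnSet m n) :
    #{α ∈ pullPFs k l m n | pullOutcome k l n α = π}
      = ∏ i ∈ Icc 1 n, (Bval k π i + Fval k l π i + 1) := by
  rw [filter_pullOutcome_eq hπ, Fintype.card_piFinset,
    prod_Icc_eq_prod_spot hπ _ fun i hi h0 => by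
      rw [Bval_add_Fval_eq_zero π i k l (mem_Icc.mp hi).1 h0, zero_add]]
  refine prod_congr rfl fun j _ => ?_
  obtain ⟨h1, hn⟩ := mem_Icc.mp (spot_succ_mem_Icc hπ j)
  rw [← card_pullTry_occBefore_eq_some π _ k l h1 hn, at1_spot_succ hπ]

end Fibers

end Pullback

theorem stmt15_general (k l m n : ℕ) :
    (pullPFs k l m n).card
      = ∑ π ∈ SmnSet m n,
          ∏ i ∈ Finset.Icc 1 n, (Bval k π i + Fval k l π i + 1) := by
  rw [Finset.card_eq_sum_card_fiberwise fun _ => Pullback.pullOutcome_mem_SmnSet]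
  exact Finset.sum_congr rfl fun π hπ => Pullback.card_filter_pullOutcome_eq hπ

theorem stmt15 (k l m n : ℕ) (h1 : 1 ≤ m) (hm : m ≤ n) :
    (pullPFs k l m n).card
      = ∑ π ∈ SmnSet m n,
          ∏ i ∈ Finset.Icc 1 n, (Bval k π i + Fval k l π i + 1) :=
  stmt15_general k l m n
end
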